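/- Let P and P' be ⊕-bisimilar and uniform AC-MAS (over domains U and U' respectively), let s ∈ S and s' ∈ S' be ⊕-bisimilar states, let φ be an FO-CTLK formula, and let σ and σ' be assignments equivalent for φ w.r.t. s and s'. Then: (1) for every t ∈ S with s → t, if |U'| ≥ |adom(s) ∪ adom(t) ∪ C ∪ σ(free(φ))|, then there exists t' ∈ S' with s' → t', t ≈ t', and σ, σ' equivalent for φ w.r.t. t and t'; (2) for every t ∈ S with s ~_i t, if |U'| ≥ |adom(s) ∪ adom(t) ∪ C ∪ σ(free(φ))|, then there exists t' ∈ S' with s' ~_i t', t ≈ t', and σ, σ' equivalent for φ w.r.t. t and t'. -/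
import Mathlib


/-!  Common formalisation of artifact-centric multi-agent systems (AC-MAS). -/

open Set

/-- A database schema: a finite type of relation symbols, each with an arity. -/
structure Schema : Type 1 where
  Rel : Type
  [relFin : Fintype Rel]
  arity : Rel → ℕ

attribute [instance] Schema.relFin

/-- A `D`-instance over an interpretation domain `U`: every relation symbol is
interpreted as a finite set of tuples over `U`. -/
structure Inst (D : Schema) (U : Type) : Type where
  rel : ∀ r : D.Rel, Set (Fin (D.arity r) → U)
  finite : ∀ r, (rel r).Finite

/-- The active domain of an instance. -/
def Inst.adom {D : Schema} {U : Type} (I : Inst D U) : Set U :=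
  { u | ∃ (r : D.Rel) (t : Fin (D.arity r) → U), t ∈ I.rel r ∧ ∃ j, t j = u }

/-- The schema `D` together with a primed copy of every relation symbol. -/
def Schema.double (D : Schema) : Schema where
  Rel := D.Rel ⊕ D.Rel
  relFin := inferInstance
  arity := Sum.elim D.arity D.arity

/-- The disjunctive join `I ⊕ J`: unprimed symbols are interpreted as in `I`,
primed symbols as in `J`. -/
def Inst.oplus {D : Schema} {U : Type} (I J : Inst D U) : Inst D.double U where
  rel := fun r => match r with
    | .inl r₀ => I.rel r₀
    | .inr r₀ => J.rel r₀
  finite := fun r => by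
    cases r with
    | inl r₀ => exact I.finite r₀
    | inr r₀ => exact J.finite r₀

/-- Image of an instance under a map of domains. -/
def Inst.map {D : Schema} {C U : Type} (f : C → U) (I : Inst D C) : Inst D U where
  rel := fun r => (fun t => f ∘ t) '' I.rel r
  finite := fun r => (I.finite r).image _

/-! ### First-order formulas -/

/-- Terms: variables (natural numbers) or constants from `C`. -/
abbrev Term (C : Type) := ℕ ⊕ C

def Term.varsF {C : Type} : Term C → Finset ℕ
  | .inl x => {x}
  | .inr _ => ∅

def Term.constsS {C : Type} : Term C → Set C
  | .inl _ => ∅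
  | .inr c => {c}

def Term.val {C U : Type} (cst : C → U) (σ : ℕ → U) : Term C → U
  | .inl x => σ x
  | .inr c => cst c

/-- First-order formulas over schema `D`, with equality, constants from `C`
and no function symbols. -/
inductive FO (D : Schema) (C : Type) : Type where
  | eq : Term C → Term C → FO D C
  | rel : (r : D.Rel) → (Fin (D.arity r) → Term C) → FO D C
  | not : FO D C → FO D C
  | imp : FO D C → FO D C → FO D C
  | all : ℕ → FO D C → FO D C

namespace FO

variable {D : Schema} {C : Type}

/-- Free variables. -/
def free : FO D C → Finset ℕ
  | .eq t₁ t₂ => t₁.varsF ∪ t₂.varsF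
  | .rel _ ts => Finset.univ.biUnion fun j => (ts j).varsF
  | .not φ => φ.free
  | .imp φ ψ => φ.free ∪ ψ.free
  | .all x φ => φ.free.erase x

/-- All variables. -/
def vars : FO D C → Finset ℕ
  | .eq t₁ t₂ => t₁.varsF ∪ t₂.varsF
  | .rel _ ts => Finset.univ.biUnion fun j => (ts j).varsF
  | .not φ => φ.vars
  | .imp φ ψ => φ.vars ∪ ψ.vars
  | .all x φ => insert x φ.vars

/-- Constants mentioned in a formula. -/
def consts : FO D C → Set C
  | .eq t₁ t₂ => t₁.constsS ∪ t₂.constsS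
  | .rel _ ts => ⋃ j, (ts j).constsS
  | .not φ => φ.consts
  | .imp φ ψ => φ.consts ∪ ψ.consts
  | .all _ φ => φ.consts

/-- The formula mentions only relation symbols from `R`. -/
def UsesOnly (R : Set D.Rel) : FO D C → Prop
  | .eq _ _ => True
  | .rel r _ => r ∈ R
  | .not φ => φ.UsesOnly R
  | .imp φ ψ => φ.UsesOnly R ∧ ψ.UsesOnly R
  | .all _ φ => φ.UsesOnly R

/-- Satisfaction of FO-formulas, with active-domain quantification. -/
def sat {U : Type} (cst : C → U) (I : Inst D U) : (ℕ → U) → FO D C → Prop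
  | σ, .eq t₁ t₂ => t₁.val cst σ = t₂.val cst σ
  | σ, .rel r ts => (fun j => (ts j).val cst σ) ∈ I.rel r
  | σ, .not φ => ¬ sat cst I σ φ
  | σ, .imp φ ψ => sat cst I σ φ → sat cst I σ ψ
  | σ, .all x φ => ∀ u ∈ I.adom, sat cst I (Function.update σ x u) φ

end FO

/-! ### Agents and AC-MAS -/

/-- The signature of an agent: a finite set of action types with parameter counts. -/
structure AgentSig : Type 1 where
  Act : Type
  [actFin : Fintype Act]
  np : Act → ℕ

attribute [instance] AgentSig.actFin

/-- A ground action: an action type together with ground parameters. -/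
def GAct (g : AgentSig) (U : Type) : Type := Σ a : g.Act, Fin (g.np a) → U

/-- Renaming of ground-action parameters. -/
def GAct.map {g : AgentSig} {U U' : Type} (f : U → U') : GAct g U → GAct g U'
  | ⟨a, u⟩ => ⟨a, fun j => f (u j)⟩

/-- An agent: local states structured as database instances, and a protocol. -/
structure Agent (D : Schema) (g : AgentSig) (U : Type) : Type where
  L : Set (Inst D U)
  Pr : Inst D U → Set (GAct g U)

/-- A global state: one local database instance per agent `0, …, n`
(agent `0` is the environment). -/
abbrev GState (D : Schema) (n : ℕ) (U : Type) := Fin (n+1) → Inst D U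

/-- A joint (global) ground action. -/
abbrev JAct {n : ℕ} (sig : Fin (n+1) → AgentSig) (U : Type) : Type := ∀ i, GAct (sig i) U

def JAct.map {n : ℕ} {sig : Fin (n+1) → AgentSig} {U U' : Type} (f : U → U')
    (a : JAct sig U) : JAct sig U' := fun i => (a i).map f

/-- The set of individuals occurring as parameters of a joint ground action. -/
def actElems {n : ℕ} {sig : Fin (n+1) → AgentSig} {U : Type} (a : JAct sig U) : Set U :=
  { u | ∃ (i : Fin (n+1)) (j : Fin ((sig i).np (a i).1)), (a i).2 j = u }

/-- Active domain of a family of instances (e.g. a global state). -/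
def adomF {D : Schema} {X U : Type} (s : X → Inst D U) : Set U := ⋃ i, (s i).adom

/-- The global instance `D_s` associated with a global state. -/
def gInst {D : Schema} {n : ℕ} {U : Type} (s : GState D n U) : Inst D U where
  rel := fun r => ⋃ i, (s i).rel r
  finite := fun r => Set.finite_iUnion fun i => (s i).finite r

/-- Componentwise disjunctive join of two global states. -/
def oplusG {D : Schema} {n : ℕ} {U : Type} (s t : GState D n U) : GState D.double n U :=
  fun i => (s i).oplus (t i)

/-- An artifact-centric multi-agent system. -/
structure ACMAS (D : Schema) {n : ℕ} (sig : Fin (n+1) → AgentSig) {U : Type}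
    (Ag : ∀ i, Agent D (sig i) U) : Type where
  /-- set of (reachable) global states -/
  S : Set (GState D n U)
  /-- initial global state -/
  s0 : GState D n U
  s0_mem : s0 ∈ S
  states_local : ∀ s ∈ S, ∀ i, s i ∈ (Ag i).L
  /-- global transition function -/
  τ : GState D n U → JAct sig U → Set (GState D n U)
  /-- `τ` is defined only on protocol-enabled joint actions -/
  tau_enabled : ∀ s a, (τ s a).Nonempty → ∀ i, a i ∈ (Ag i).Pr (s i)
  tau_closed : ∀ s ∈ S, ∀ a, τ s a ⊆ S

namespace ACMAS

variable {D : Schema} {n : ℕ} {sig : Fin (n+1) → AgentSig} {U : Type}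
  {Ag : ∀ i, Agent D (sig i) U}

/-- The transition relation `s → t`. -/
def Tr (M : ACMAS D sig Ag) (s t : GState D n U) : Prop := ∃ a, t ∈ M.τ s a

/-- Epistemic indistinguishability for agent `i`. -/
def Epi (M : ACMAS D sig Ag) (i : Fin (n+1)) (s t : GState D n U) : Prop :=
  s ∈ M.S ∧ t ∈ M.S ∧ s i = t i

/-- Union of the epistemic relations of agents `1, …, n`. -/
def EpiAny (M : ACMAS D sig Ag) (s t : GState D n U) : Prop :=
  ∃ i : Fin n, M.Epi i.succ s t

/-- The standard assumptions: the transition relation is serial and `S` is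
exactly the set of states reachable from `s0`. -/
def Std (M : ACMAS D sig Ag) : Prop :=
  (∀ s ∈ M.S, ∃ t, M.Tr s t) ∧ M.S = { s | Relation.ReflTransGen M.Tr M.s0 s }

/-- An (infinite) run. -/
def IsRun (M : ACMAS D sig Ag) (r : ℕ → GState D n U) : Prop :=
  (∀ k, r k ∈ M.S) ∧ ∀ k, M.Tr (r k) (r (k+1))

/-- A temporal-epistemic run. -/
def IsTERun (M : ACMAS D sig Ag) (r : ℕ → GState D n U) : Prop :=
  (∀ k, r k ∈ M.S) ∧ ∀ k, M.Tr (r k) (r (k+1)) ∨ M.EpiAny (r k) (r (k+1))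

end ACMAS

/-! ### Isomorphisms and equivalent assignments -/

/-- `ι` is a witness for the isomorphism of the families `s` and `s'`:
a constant-preserving bijection between the active domains extended with the
constants, preserving all relations componentwise. -/
def IsWitness {D : Schema} {X C U U' : Type} (cst : C → U) (cst' : C → U')
    (ι : U → U') (s : X → Inst D U) (s' : X → Inst D U') : Prop :=
  Set.BijOn ι (adomF s ∪ Set.range cst) (adomF s' ∪ Set.range cst') ∧
  (∀ c, ι (cst c) = cst' c) ∧
  ∀ (i : X) (r : D.Rel) (t : Fin (D.arity r) → U),
    (∀ j, t j ∈ adomF s ∪ Set.range cst) →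
    (t ∈ (s i).rel r ↔ (fun j => ι (t j)) ∈ (s' i).rel r)

/-- Isomorphism of families of instances (in particular global states). -/
def Iso {D : Schema} {X C U U' : Type} (cst : C → U) (cst' : C → U')
    (s : X → Inst D U) (s' : X → Inst D U') : Prop :=
  ∃ ι, IsWitness cst cst' ι s s'

/-- Equivalent assignments for a set `V` of variables w.r.t. `s` and `s'`. -/
def EqAssign {D : Schema} {n : ℕ} {C U U' : Type} (cst : C → U) (cst' : C → U')
    (V : Set ℕ) (σ : ℕ → U) (σ' : ℕ → U')
    (s : GState D n U) (s' : GState D n U') : Prop :=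
  ∃ γ : U → U',
    Set.BijOn γ (adomF s ∪ Set.range cst ∪ σ '' V)
      (adomF s' ∪ Set.range cst' ∪ σ' '' V) ∧
    IsWitness cst cst' γ s s' ∧
    ∀ x ∈ V, σ' x = γ (σ x)

/-! ### Simulations and bisimulations -/

section Bisim

variable {D : Schema} {n : ℕ} {sig sig' : Fin (n+1) → AgentSig} {C U U' : Type}
  {Ag : ∀ i, Agent D (sig i) U} {Ag' : ∀ i, Agent D (sig' i) U'}

/-- Simulation between two AC-MAS. -/
def IsSim (cst : C → U) (cst' : C → U')
    (M : ACMAS D sig Ag) (M' : ACMAS D sig' Ag')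
    (R : GState D n U → GState D n U' → Prop) : Prop :=
  ∀ s s', R s s' →
    s ∈ M.S ∧ s' ∈ M'.S ∧ Iso cst cst' s s' ∧
    ∀ t, M.Tr s t → ∃ t', M'.Tr s' t' ∧ R t t'

/-- Bisimulation. -/
def IsBisim (cst : C → U) (cst' : C → U')
    (M : ACMAS D sig Ag) (M' : ACMAS D sig' Ag')
    (R : GState D n U → GState D n U' → Prop) : Prop :=
  IsSim cst cst' M M' R ∧ IsSim cst' cst M' M (fun s' s => R s s')

/-- Bisimilarity of states. -/
def Bisimilar (cst : C → U) (cst' : C → U')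
    (M : ACMAS D sig Ag) (M' : ACMAS D sig' Ag')
    (s : GState D n U) (s' : GState D n U') : Prop :=
  ∃ R, IsBisim cst cst' M M' R ∧ R s s'

/-- `P ≈ P'`: the two systems are bisimilar. -/
def BisimSys (cst : C → U) (cst' : C → U')
    (M : ACMAS D sig Ag) (M' : ACMAS D sig' Ag') : Prop :=
  Bisimilar cst cst' M M' M.s0 M'.s0

/-- ⊕-simulation. -/
def IsOSim (cst : C → U) (cst' : C → U')
    (M : ACMAS D sig Ag) (M' : ACMAS D sig' Ag')
    (R : GState D n U → GState D n U' → Prop) : Prop :=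
  ∀ s s', R s s' →
    s ∈ M.S ∧ s' ∈ M'.S ∧ Iso cst cst' s s' ∧
    (∀ t, M.Tr s t → ∃ t', M'.Tr s' t' ∧
        Iso cst cst' (oplusG s t) (oplusG s' t') ∧ R t t') ∧
    (∀ (t : GState D n U) (i : Fin n), M.Epi i.succ s t →
        ∃ t', M'.Epi i.succ s' t' ∧
          Iso cst cst' (oplusG s t) (oplusG s' t') ∧ R t t')

/-- ⊕-bisimulation. -/
def IsOBisim (cst : C → U) (cst' : C → U')
    (M : ACMAS D sig Ag) (M' : ACMAS D sig' Ag')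
    (R : GState D n U → GState D n U' → Prop) : Prop :=
  IsOSim cst cst' M M' R ∧ IsOSim cst' cst M' M (fun s' s => R s s')

/-- ⊕-bisimilarity of states. -/
def OBisimilar (cst : C → U) (cst' : C → U')
    (M : ACMAS D sig Ag) (M' : ACMAS D sig' Ag')
    (s : GState D n U) (s' : GState D n U') : Prop :=
  ∃ R, IsOBisim cst cst' M M' R ∧ R s s'

/-- The two systems are ⊕-bisimilar. -/
def OBisimSys (cst : C → U) (cst' : C → U')
    (M : ACMAS D sig Ag) (M' : ACMAS D sig' Ag') : Prop :=
  OBisimilar cst cst' M M' M.s0 M'.s0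

end Bisim

/-! ### Uniformity and boundedness -/

section Uniform

variable {D : Schema} {n : ℕ} {sig : Fin (n+1) → AgentSig} {C U : Type}
  {Ag : ∀ i, Agent D (sig i) U}

/-- Temporal condition (1) of uniformity. -/
def UniformT (cst : C → U) (M : ACMAS D sig Ag) : Prop :=
  ∀ s ∈ M.S, ∀ t ∈ M.S, ∀ s' ∈ M.S, ∀ (t' : GState D n U) (a : JAct sig U),
    t ∈ M.τ s a →
    ∀ ι : U → U, IsWitness cst cst ι (oplusG s t) (oplusG s' t') →
    ∀ ι' : U → U,
      (∀ u ∈ adomF (oplusG s t) ∪ Set.range cst, ι' u = ι u) →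
      Set.InjOn ι' (adomF (oplusG s t) ∪ Set.range cst ∪ actElems a) →
      (∀ c, ι' (cst c) = cst c) →
      t' ∈ M.τ s' (JAct.map ι' a)

/-- Epistemic condition (2) of uniformity. -/
def UniformE (cst : C → U) (M : ACMAS D sig Ag) : Prop :=
  ∀ s ∈ M.S, ∀ t ∈ M.S, ∀ s' ∈ M.S, ∀ (t' : GState D n U) (i : Fin n),
    M.Epi i.succ s t → Iso cst cst (oplusG s t) (oplusG s' t') →
    M.Epi i.succ s' t'

/-- Uniform AC-MAS. -/
def Uniform (cst : C → U) (M : ACMAS D sig Ag) : Prop :=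
  UniformT cst M ∧ UniformE cst M

/-- `b`-bounded AC-MAS: no reachable state has more than `b` distinct elements
in its active domain. -/
def BBounded (M : ACMAS D sig Ag) (b : ℕ) : Prop :=
  ∀ s ∈ M.S, (adomF s).Finite ∧ (adomF s).ncard ≤ b

end Uniform

/-- `N_Ag`: the sum over the agents of the maximal number of parameters of
their action types. -/
def NAg {n : ℕ} (sig : Fin (n+1) → AgentSig) : ℕ :=
  ∑ i, Finset.univ.sup (sig i).np

/-! ### Abstractions -/

section Abstraction

variable {D : Schema} {n : ℕ} {sig : Fin (n+1) → AgentSig} {C U U' : Type}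
  {Ag : ∀ i, Agent D (sig i) U} {Ag' : ∀ i, Agent D (sig i) U'}

/-- `A'` is the abstract agent corresponding to `A`, over the domain `U'`. -/
def IsAbstractAgent {g : AgentSig} (cst : C → U) (cst' : C → U')
    (A : Agent D g U) (A' : Agent D g U') : Prop :=
  ∀ (l' : Inst D U') (α' : GAct g U'), α' ∈ A'.Pr l' ↔
    ∃ l ∈ A.L, ∃ α ∈ A.Pr l, ∃ ι : U → U',
      IsWitness cst cst' ι (fun _ : PUnit => l) (fun _ : PUnit => l') ∧
      ∃ ι' : U → U',
        (∀ u ∈ l.adom ∪ Set.range cst, ι' u = ι u) ∧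
        Set.InjOn ι' (l.adom ∪ Set.range cst ∪ Set.range α.2) ∧
        α' = α.map ι'

/-- `M'` is an abstraction of `M` (over the abstract agents `Ag'`). -/
def IsAbstraction (cst : C → U) (cst' : C → U')
    (M : ACMAS D sig Ag) (M' : ACMAS D sig Ag') : Prop :=
  (∀ i, IsAbstractAgent cst cst' (Ag i) (Ag' i)) ∧
  Iso cst' cst M'.s0 M.s0 ∧
  ∀ (s' t' : GState D n U') (a' : JAct sig U'),
    t' ∈ M'.τ s' a' ↔
      ∃ s ∈ M.S, ∃ t ∈ M.S, ∃ a : JAct sig U, t ∈ M.τ s a ∧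
        ∃ ι : U → U', IsWitness cst cst' ι s s' ∧ IsWitness cst cst' ι t t' ∧
          ∃ ι' : U → U',
            (∀ u ∈ adomF s ∪ adomF t ∪ Set.range cst, ι' u = ι u) ∧
            Set.InjOn ι' (adomF s ∪ adomF t ∪ Set.range cst ∪ actElems a) ∧
            a' = JAct.map ι' a

/-- `M'` is a ⊕-abstraction of `M` (over the abstract agents `Ag'`).
The requirement `s0' = s0` is rendered, across the two interpretation
domains, as: the initial states are isomorphic and `adom(s0) ⊆ C`. -/
def IsOAbstraction (cst : C → U) (cst' : C → U')
    (M : ACMAS D sig Ag) (M' : ACMAS D sig Ag') : Prop :=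
  (∀ i, IsAbstractAgent cst cst' (Ag i) (Ag' i)) ∧
  (Iso cst cst' M.s0 M'.s0 ∧ adomF M.s0 ⊆ Set.range cst) ∧
  ∀ (s' t' : GState D n U') (a' : JAct sig U'),
    t' ∈ M'.τ s' a' ↔
      ∃ s ∈ M.S, ∃ t ∈ M.S, ∃ a : JAct sig U, t ∈ M.τ s a ∧
        ∃ ι : U → U',
          IsWitness cst cst' ι (oplusG s t) (oplusG s' t') ∧
          ∃ ι' : U → U',
            (∀ u ∈ adomF (oplusG s t) ∪ Set.range cst, ι' u = ι u) ∧
            Set.InjOn ι' (adomF (oplusG s t) ∪ Set.range cst ∪ actElems a) ∧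
            a' = JAct.map ι' a

end Abstraction

/-! ### Temporal-epistemic specification languages -/

/-- Sentence-atomic FO-CTL formulas. -/
inductive SAFOCTL (D : Schema) (C : Type) : Type where
  | atom : (ψ : FO D C) → ψ.free = ∅ → SAFOCTL D C
  | not : SAFOCTL D C → SAFOCTL D C
  | imp : SAFOCTL D C → SAFOCTL D C → SAFOCTL D C
  | ax : SAFOCTL D C → SAFOCTL D C
  | au : SAFOCTL D C → SAFOCTL D C → SAFOCTL D C
  | eu : SAFOCTL D C → SAFOCTL D C → SAFOCTL D C

/-- Satisfaction of SA-FO-CTL formulas at a global state. -/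
def SAFOCTL.sat {D : Schema} {C : Type} {n : ℕ} {sig : Fin (n+1) → AgentSig}
    {U : Type} {Ag : ∀ i, Agent D (sig i) U}
    (cst : C → U) (M : ACMAS D sig Ag) :
    SAFOCTL D C → GState D n U → Prop
  | .atom ψ _, s => ∀ σ, FO.sat cst (gInst s) σ ψ
  | .not φ, s => ¬ SAFOCTL.sat cst M φ s
  | .imp φ ψ, s => SAFOCTL.sat cst M φ s → SAFOCTL.sat cst M ψ s
  | .ax φ, s => ∀ r, M.IsRun r → r 0 = s → SAFOCTL.sat cst M φ (r 1)
  | .au φ ψ, s => ∀ r, M.IsRun r → r 0 = s →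
      ∃ k, SAFOCTL.sat cst M ψ (r k) ∧ ∀ j < k, SAFOCTL.sat cst M φ (r j)
  | .eu φ ψ, s => ∃ r, M.IsRun r ∧ r 0 = s ∧
      ∃ k, SAFOCTL.sat cst M ψ (r k) ∧ ∀ j < k, SAFOCTL.sat cst M φ (r j)

/-- `P ⊨ φ` for SA-FO-CTL. -/
def SAFOCTL.satM {D : Schema} {C : Type} {n : ℕ} {sig : Fin (n+1) → AgentSig}
    {U : Type} {Ag : ∀ i, Agent D (sig i) U}
    (cst : C → U) (M : ACMAS D sig Ag) (φ : SAFOCTL D C) : Prop :=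
  SAFOCTL.sat cst M φ M.s0

/-- FO-CTLK formulas, with epistemic operators for agents `1, …, n` and
common knowledge. -/
inductive FOCTLK (D : Schema) (C : Type) (n : ℕ) : Type where
  | atom : FO D C → FOCTLK D C n
  | not : FOCTLK D C n → FOCTLK D C n
  | imp : FOCTLK D C n → FOCTLK D C n → FOCTLK D C n
  | all : ℕ → FOCTLK D C n → FOCTLK D C n
  | ax : FOCTLK D C n → FOCTLK D C n
  | au : FOCTLK D C n → FOCTLK D C n → FOCTLK D C n
  | eu : FOCTLK D C n → FOCTLK D C n → FOCTLK D C n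
  | know : Fin n → FOCTLK D C n → FOCTLK D C n
  | ck : FOCTLK D C n → FOCTLK D C n

namespace FOCTLK

variable {D : Schema} {C : Type} {n : ℕ}

def free : FOCTLK D C n → Finset ℕ
  | .atom ψ => ψ.free
  | .not φ => φ.free
  | .imp φ ψ => φ.free ∪ ψ.free
  | .all x φ => φ.free.erase x
  | .ax φ => φ.free
  | .au φ ψ => φ.free ∪ ψ.free
  | .eu φ ψ => φ.free ∪ ψ.free
  | .know _ φ => φ.free
  | .ck φ => φ.free

def vars : FOCTLK D C n → Finset ℕ
  | .atom ψ => ψ.vars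
  | .not φ => φ.vars
  | .imp φ ψ => φ.vars ∪ ψ.vars
  | .all x φ => insert x φ.vars
  | .ax φ => φ.vars
  | .au φ ψ => φ.vars ∪ ψ.vars
  | .eu φ ψ => φ.vars ∪ ψ.vars
  | .know _ φ => φ.vars
  | .ck φ => φ.vars

/-- Satisfaction `(P, s, σ) ⊨ φ` of FO-CTLK formulas. -/
def sat {sig : Fin (n+1) → AgentSig} {U : Type} {Ag : ∀ i, Agent D (sig i) U}
    (cst : C → U) (M : ACMAS D sig Ag) :
    FOCTLK D C n → GState D n U → (ℕ → U) → Prop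
  | .atom ψ, s, σ => FO.sat cst (gInst s) σ ψ
  | .not φ, s, σ => ¬ sat cst M φ s σ
  | .imp φ ψ, s, σ => sat cst M φ s σ → sat cst M ψ s σ
  | .all x φ, s, σ => ∀ u ∈ adomF s, sat cst M φ s (Function.update σ x u)
  | .ax φ, s, σ => ∀ r, M.IsRun r → r 0 = s → sat cst M φ (r 1) σ
  | .au φ ψ, s, σ => ∀ r, M.IsRun r → r 0 = s →
      ∃ k, sat cst M ψ (r k) σ ∧ ∀ j < k, sat cst M φ (r j) σ
  | .eu φ ψ, s, σ => ∃ r, M.IsRun r ∧ r 0 = s ∧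
      ∃ k, sat cst M ψ (r k) σ ∧ ∀ j < k, sat cst M φ (r j) σ
  | .know i φ, s, σ => ∀ t, M.Epi i.succ s t → sat cst M φ t σ
  | .ck φ, s, σ => ∀ t, Relation.TransGen M.EpiAny s t → sat cst M φ t σ

/-- `P ⊨ φ` for FO-CTLK: satisfaction at the initial state under every
assignment. -/
def satM {sig : Fin (n+1) → AgentSig} {U : Type} {Ag : ∀ i, Agent D (sig i) U}
    (cst : C → U) (M : ACMAS D sig Ag) (φ : FOCTLK D C n) : Prop :=
  ∀ σ : ℕ → U, sat cst M φ M.s0 σ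

end FOCTLK

/-- FO-ECTLK: the existential fragment. -/
inductive FOECTLK (D : Schema) (C : Type) (n : ℕ) : Type where
  | atom : FO D C → FOECTLK D C n
  | and : FOECTLK D C n → FOECTLK D C n → FOECTLK D C n
  | or : FOECTLK D C n → FOECTLK D C n → FOECTLK D C n
  | all : ℕ → FOECTLK D C n → FOECTLK D C n
  | ex : ℕ → FOECTLK D C n → FOECTLK D C n
  | enext : FOECTLK D C n → FOECTLK D C n
  | eu : FOECTLK D C n → FOECTLK D C n → FOECTLK D C n
  | dknow : Fin n → FOECTLK D C n → FOECTLK D C n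
  | dck : FOECTLK D C n → FOECTLK D C n

/-- Satisfaction of FO-ECTLK formulas. -/
def FOECTLK.sat {D : Schema} {C : Type} {n : ℕ} {sig : Fin (n+1) → AgentSig}
    {U : Type} {Ag : ∀ i, Agent D (sig i) U}
    (cst : C → U) (M : ACMAS D sig Ag) :
    FOECTLK D C n → GState D n U → (ℕ → U) → Prop
  | .atom ψ, s, σ => FO.sat cst (gInst s) σ ψ
  | .and φ ψ, s, σ => FOECTLK.sat cst M φ s σ ∧ FOECTLK.sat cst M ψ s σ
  | .or φ ψ, s, σ => FOECTLK.sat cst M φ s σ ∨ FOECTLK.sat cst M ψ s σ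
  | .all x φ, s, σ => ∀ u ∈ adomF s, FOECTLK.sat cst M φ s (Function.update σ x u)
  | .ex x φ, s, σ => ∃ u ∈ adomF s, FOECTLK.sat cst M φ s (Function.update σ x u)
  | .enext φ, s, σ => ∃ r, M.IsRun r ∧ r 0 = s ∧ FOECTLK.sat cst M φ (r 1) σ
  | .eu φ ψ, s, σ => ∃ r, M.IsRun r ∧ r 0 = s ∧
      ∃ k, FOECTLK.sat cst M ψ (r k) σ ∧ ∀ j < k, FOECTLK.sat cst M φ (r j) σ
  | .dknow i φ, s, σ => ∃ t, M.Epi i.succ s t ∧ FOECTLK.sat cst M φ t σ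
  | .dck φ, s, σ => ∃ t, Relation.TransGen M.EpiAny s t ∧ FOECTLK.sat cst M φ t σ

/-- `P ⊨ φ` for FO-ECTLK. -/
def FOECTLK.satM {D : Schema} {C : Type} {n : ℕ} {sig : Fin (n+1) → AgentSig}
    {U : Type} {Ag : ∀ i, Agent D (sig i) U}
    (cst : C → U) (M : ACMAS D sig Ag) (φ : FOECTLK D C n) : Prop :=
  ∀ σ : ℕ → U, FOECTLK.sat cst M φ M.s0 σ

/-- `Mb` is the `b`-restriction of `M`. -/
def IsBRestriction {D : Schema} {n : ℕ} {sig : Fin (n+1) → AgentSig} {U : Type}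
    {Ag : ∀ i, Agent D (sig i) U} (Mb M : ACMAS D sig Ag) (b : ℕ) : Prop :=
  Mb.s0 = M.s0 ∧
  Mb.S = { s ∈ M.S | (adomF s).Finite ∧ (adomF s).ncard ≤ b } ∧
  ∀ s a, Mb.τ s a = { t ∈ M.τ s a | s ∈ Mb.S ∧ t ∈ Mb.S }

/-! ### Artifact-centric programs -/

/-- A declarative artifact-centric program. -/
structure ACProgram (D : Schema) (C : Type) {n : ℕ} (sig : Fin (n+1) → AgentSig) where
  /-- local database schemas, as sets of relation symbols -/
  locRel : Fin (n+1) → Set D.Rel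
  locDisj : ∀ i j, i ≠ j → Disjoint (locRel i) (locRel j)
  /-- initial local states; their values are constants -/
  l0 : ∀ _ : Fin (n+1), Inst D C
  l0_loc : ∀ i r, r ∉ locRel i → (l0 i).rel r = ∅
  /-- preconditions: FO-formulas over the local schema whose free variables
  are among the action parameters -/
  pre : ∀ i, (sig i).Act → FO D C
  /-- postconditions: FO-formulas over the global schema and its primed copy -/
  post : ∀ i, (sig i).Act → FO D.double C
  pre_free : ∀ i a, ↑(pre i a).free ⊆ { x : ℕ | x < (sig i).np a }
  post_free : ∀ i a, ↑(post i a).free ⊆ { x : ℕ | x < (sig i).np a }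
  pre_loc : ∀ i a, (pre i a).UsesOnly (locRel i)

namespace ACProgram

variable {D : Schema} {C : Type} {n : ℕ} {sig : Fin (n+1) → AgentSig}

/-- The constants mentioned in the program. -/
def progConsts (P : ACProgram D C sig) : Set C :=
  (⋃ i, (P.l0 i).adom) ∪
  ⋃ i, ⋃ a : (sig i).Act, ((P.pre i a).consts ∪ (P.post i a).consts)

/-- Ground values of the postcondition parameters of a joint ground action. -/
def postElems (P : ACProgram D C sig) {U : Type} (a : JAct sig U) : Set U :=
  { u | ∃ (i : Fin (n+1)) (j : Fin ((sig i).np (a i).1)),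
      (j : ℕ) ∈ (P.post i (a i).1).free ∧ (a i).2 j = u }

/-- The agent induced by the program for index `i`. -/
def InducedAgent {U : Type} (cst : C → U) (P : ACProgram D C sig) (i : Fin (n+1))
    (A : Agent D (sig i) U) : Prop :=
  A.L = { l : Inst D U | ∀ r, r ∉ P.locRel i → l.rel r = ∅ } ∧
  ∀ (l : Inst D U) (α : GAct (sig i) U), α ∈ A.Pr l ↔
    ∀ σ : ℕ → U, (∀ j : Fin ((sig i).np α.1), σ (j : ℕ) = α.2 j) →
      FO.sat cst l σ (P.pre i α.1)

/-- The transitions induced by the program. -/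
def InducedTrans {U : Type} (cst : C → U) (P : ACProgram D C sig)
    (s t : GState D n U) (a : JAct sig U) : Prop :=
  (∀ i, ∀ σ : ℕ → U, (∀ j : Fin ((sig i).np (a i).1), σ (j : ℕ) = (a i).2 j) →
      FO.sat cst (s i) σ (P.pre i (a i).1)) ∧
  adomF t ⊆ adomF s ∪ P.postElems a ∪ cst '' (⋃ i, (P.post i (a i).1).consts) ∧
  (∀ i, ∀ σ : ℕ → U, (∀ j : Fin ((sig i).np (a i).1), σ (j : ℕ) = (a i).2 j) →
      FO.sat cst ((gInst s).oplus (gInst t)) σ (P.post i (a i).1))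

/-- `M` is the AC-MAS induced by the program `P` (the transition relation is
assumed to be serial). -/
def InducedACMAS {U : Type} (cst : C → U) (P : ACProgram D C sig)
    (Ag : ∀ i, Agent D (sig i) U) (M : ACMAS D sig Ag) : Prop :=
  (∀ i, P.InducedAgent cst i (Ag i)) ∧
  M.s0 = (fun i => (P.l0 i).map cst) ∧
  (∀ s t a, t ∈ M.τ s a ↔ P.InducedTrans cst s t a) ∧
  M.Std

end ACProgram

/-! ### STATEMENT 8 -/

section Helpers

variable {D : Schema} {C U U' U'' : Type}

lemma Inst.ext' {I J : Inst D U} (h : ∀ r, I.rel r = J.rel r) : I = J := by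
  cases I; cases J; simp only [Inst.mk.injEq]; exact funext h

lemma Inst.adom_finite (I : Inst D U) : I.adom.Finite := by
  have hsub : I.adom ⊆ ⋃ r : D.Rel, ⋃ t ∈ I.rel r, Set.range t := by
    rintro u ⟨r, t, ht, j, rfl⟩
    exact Set.mem_iUnion.2 ⟨r, Set.mem_iUnion₂.2 ⟨t, ht, ⟨j, rfl⟩⟩⟩
  exact Set.Finite.subset
    (Set.finite_iUnion fun r => Set.Finite.biUnion (I.finite r)
      (fun t _ => Set.finite_range t)) hsub

lemma Inst.adom_map (f : U → U') (I : Inst D U) : (I.map f).adom = f '' I.adom := by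
  ext u; constructor
  · rintro ⟨r, t, ⟨t0, ht0, rfl⟩, j, rfl⟩
    exact ⟨t0 j, ⟨r, t0, ht0, j, rfl⟩, rfl⟩
  · rintro ⟨u0, ⟨r, t, ht, j, rfl⟩, rfl⟩
    exact ⟨r, f ∘ t, ⟨t, ht, rfl⟩, j, rfl⟩

lemma Inst.adom_oplus (I J : Inst D U) : (I.oplus J).adom = I.adom ∪ J.adom := by
  ext u; constructor
  · rintro ⟨r, t, ht, j, rfl⟩
    cases r with
    | inl r0 => exact Or.inl ⟨r0, t, ht, j, rfl⟩
    | inr r0 => exact Or.inr ⟨r0, t, ht, j, rfl⟩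
  · rintro (⟨r, t, ht, j, rfl⟩ | ⟨r, t, ht, j, rfl⟩)
    · exact ⟨Sum.inl r, t, ht, j, rfl⟩
    · exact ⟨Sum.inr r, t, ht, j, rfl⟩

lemma Inst.map_map (f : U → U') (g : U' → U'') (I : Inst D U) :
    (I.map f).map g = I.map (g ∘ f) := by
  refine Inst.ext' fun r => ?_
  simp only [Inst.map, Set.image_image]
  rfl

lemma Inst.map_id (I : Inst D U) : I.map id = I := by
  refine Inst.ext' fun r => ?_
  show (fun t => id ∘ t) '' I.rel r = I.rel r
  simp [Function.id_comp]

lemma Inst.map_oplus (f : U → U') (I J : Inst D U) :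
    (I.oplus J).map f = (I.map f).oplus (J.map f) := by
  refine Inst.ext' fun r => ?_
  cases r <;> rfl

lemma adomF_finite {X : Type} [Finite X] (s : X → Inst D U) : (adomF s).Finite :=
  Set.finite_iUnion fun i => (s i).adom_finite

lemma mem_adomF {X : Type} {s : X → Inst D U} {u : U} :
    u ∈ adomF s ↔ ∃ i, u ∈ (s i).adom := Set.mem_iUnion

lemma adomF_oplusG {n : ℕ} (s t : GState D n U) :
    adomF (oplusG s t) = adomF s ∪ adomF t := by
  simp only [adomF, oplusG, Inst.adom_oplus, Set.iUnion_union_distrib]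

lemma adomF_map {X : Type} (f : U → U') (s : X → Inst D U) :
    adomF (fun i => (s i).map f) = f '' adomF s := by
  simp only [adomF, Inst.adom_map, Set.image_iUnion]

end Helpers
section Helpers2

variable {D : Schema} {C U U' U'' : Type}

lemma bijOn_of_image_eq {α β : Type} {f : α → β} {s : Set α} {t : Set β}
    (hinj : Set.InjOn f s) (himg : f '' s = t) : Set.BijOn f s t := by
  subst himg
  exact hinj.bijOn_image

lemma IsWitness.comp {X : Type} {cst : C → U} {cst' : C → U'} {cst'' : C → U''}
    {ι : U → U'} {κ : U' → U''} {x : X → Inst D U} {y : X → Inst D U'} {z : X → Inst D U''}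
    (h1 : IsWitness cst cst' ι x y) (h2 : IsWitness cst' cst'' κ y z) :
    IsWitness cst cst'' (κ ∘ ι) x z := by
  obtain ⟨b1, c1, r1⟩ := h1
  obtain ⟨b2, c2, r2⟩ := h2
  refine ⟨b2.comp b1, fun c => by simp only [Function.comp_apply, c1 c, c2 c], ?_⟩
  intro i r t ht
  rw [r1 i r t ht, r2 i r _ (fun j => b1.mapsTo (ht j))]
  rfl

/-- A constant-preserving permutation is a witness from a family to its image. -/
lemma isWitness_map {X : Type} {cst' : C → U'} (p : U' ≃ U') (hp : ∀ c, p (cst' c) = cst' c)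
    (y : X → Inst D U') : IsWitness cst' cst' (⇑p) y (fun i => (y i).map ⇑p) := by
  refine ⟨?_, hp, ?_⟩
  · refine bijOn_of_image_eq p.injective.injOn ?_
    rw [Set.image_union, adomF_map]
    congr 1
    ext u'; constructor
    · rintro ⟨_, ⟨c, rfl⟩, rfl⟩; exact ⟨c, (hp c).symm⟩
    · rintro ⟨c, rfl⟩; exact ⟨cst' c, ⟨c, rfl⟩, hp c⟩
  · intro i r t _
    constructor
    · intro h; exact ⟨t, h, rfl⟩
    · rintro ⟨t0, h0, he⟩
      have : t0 = t := by
        funext j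
        exact p.injective (congrFun he j)
      exact this ▸ h0

/-- Inverse witness. -/
lemma IsWitness.symm_exists {X : Type} [Nonempty U] {cst : C → U} {cst' : C → U'}
    {ι : U → U'} {x : X → Inst D U} {y : X → Inst D U'}
    (h : IsWitness cst cst' ι x y) : ∃ κ : U' → U, IsWitness cst' cst κ y x := by
  classical
  obtain ⟨hbij, hc, hr⟩ := h
  set A := adomF x ∪ Set.range cst with hA
  set B := adomF y ∪ Set.range cst' with hB
  set κ := Function.invFunOn ι A with hκ
  have hmemB : ∀ v ∈ B, v ∈ ι '' A := by rw [hbij.image_eq]; exact fun v hv => hv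
  have hκA : ∀ v ∈ B, κ v ∈ A := fun v hv => Function.invFunOn_mem (hmemB v hv)
  have hright : ∀ v ∈ B, ι (κ v) = v := fun v hv => Function.invFunOn_eq (hmemB v hv)
  have hleft : ∀ u ∈ A, κ (ι u) = u := fun u hu => hbij.injOn.leftInvOn_invFunOn hu
  refine ⟨κ, ?_, ?_, ?_⟩
  · exact Set.BijOn.symm ⟨fun v hv => hright v hv, fun u hu => hleft u hu⟩ hbij
  · intro c
    have : ι (cst c) = cst' c := hc c
    rw [← this]
    exact hleft (cst c) (Or.inr ⟨c, rfl⟩)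
  · intro i r t ht
    have hk : ∀ j, κ (t j) ∈ A := fun j => hκA _ (ht j)
    have hiff := hr i r (fun j => κ (t j)) hk
    have key : (fun j => ι ((fun j => κ (t j)) j)) = t := funext fun j => hright _ (ht j)
    rw [key] at hiff
    exact hiff.symm

end Helpers2
section Helpers3

variable {D : Schema} {C U U' : Type} {n : ℕ}

lemma witness_oplus_parts {cst : C → U} {cst' : C → U'} {ι : U → U'}
    {s t : GState D n U} {s' t' : GState D n U'}
    (h : IsWitness cst cst' ι (oplusG s t) (oplusG s' t')) :
    ι '' (adomF s ∪ Set.range cst) = adomF s' ∪ Set.range cst' ∧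
    ι '' (adomF t ∪ Set.range cst) = adomF t' ∪ Set.range cst' := by
  obtain ⟨hbij, hc, hrel⟩ := h
  rw [adomF_oplusG] at hbij hrel
  rw [adomF_oplusG] at hbij
  constructor
  · apply Set.Subset.antisymm
    · rintro _ ⟨u, hu, rfl⟩
      rcases hu with hu | ⟨c, rfl⟩
      · obtain ⟨i, r, τ, hτ, j, rfl⟩ := mem_adomF.1 hu
        have hτdom : ∀ j', τ j' ∈ adomF s ∪ adomF t ∪ Set.range cst := fun j' =>
          Or.inl (Or.inl (mem_adomF.2 ⟨i, r, τ, hτ, j', rfl⟩))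
        have hmem := (hrel i (Sum.inl r) τ hτdom).mp hτ
        exact Or.inl (mem_adomF.2 ⟨i, r, fun j'' => ι (τ j''), hmem, j, rfl⟩)
      · exact Or.inr ⟨c, (hc c).symm⟩
    · rintro u' (hu' | ⟨c, rfl⟩)
      · obtain ⟨i, r, τ', hτ', j, rfl⟩ := mem_adomF.1 hu'
        have hent : ∀ j', τ' j' ∈ ι '' (adomF s ∪ adomF t ∪ Set.range cst) := by
          intro j'
          rw [hbij.image_eq]
          exact Or.inl (Or.inl (mem_adomF.2 ⟨i, r, τ', hτ', j', rfl⟩))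
        choose τ hτmem hτeq using hent
        have hτ'eq : (fun j' => ι (τ j')) = τ' := funext hτeq
        have hiff : τ ∈ (s i).rel r ↔ (fun j' => ι (τ j')) ∈ (s' i).rel r :=
          hrel i (Sum.inl r) τ hτmem
        rw [hτ'eq] at hiff
        have hτrel : τ ∈ (s i).rel r := hiff.mpr hτ'
        exact ⟨τ j, Or.inl (mem_adomF.2 ⟨i, r, τ, hτrel, j, rfl⟩), hτeq j⟩
      · exact ⟨cst c, Or.inr ⟨c, rfl⟩, hc c⟩
  · apply Set.Subset.antisymm
    · rintro _ ⟨u, hu, rfl⟩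
      rcases hu with hu | ⟨c, rfl⟩
      · obtain ⟨i, r, τ, hτ, j, rfl⟩ := mem_adomF.1 hu
        have hτdom : ∀ j', τ j' ∈ adomF s ∪ adomF t ∪ Set.range cst := fun j' =>
          Or.inl (Or.inr (mem_adomF.2 ⟨i, r, τ, hτ, j', rfl⟩))
        have hmem := (hrel i (Sum.inr r) τ hτdom).mp hτ
        exact Or.inl (mem_adomF.2 ⟨i, r, fun j'' => ι (τ j''), hmem, j, rfl⟩)
      · exact Or.inr ⟨c, (hc c).symm⟩
    · rintro u' (hu' | ⟨c, rfl⟩)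
      · obtain ⟨i, r, τ', hτ', j, rfl⟩ := mem_adomF.1 hu'
        have hent : ∀ j', τ' j' ∈ ι '' (adomF s ∪ adomF t ∪ Set.range cst) := by
          intro j'
          rw [hbij.image_eq]
          exact Or.inl (Or.inr (mem_adomF.2 ⟨i, r, τ', hτ', j', rfl⟩))
        choose τ hτmem hτeq using hent
        have hτ'eq : (fun j' => ι (τ j')) = τ' := funext hτeq
        have hiff : τ ∈ (t i).rel r ↔ (fun j' => ι (τ j')) ∈ (t' i).rel r :=
          hrel i (Sum.inr r) τ hτmem
        rw [hτ'eq] at hiff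
        have hτrel : τ ∈ (t i).rel r := hiff.mpr hτ'
        exact ⟨τ j, Or.inl (mem_adomF.2 ⟨i, r, τ, hτrel, j, rfl⟩), hτeq j⟩
      · exact ⟨cst c, Or.inr ⟨c, rfl⟩, hc c⟩

lemma exists_perm_extend {α : Type} {B : Set α} (hB : B.Finite) {q : α → α}
    (hq : Set.InjOn q B) : ∃ p : α ≃ α, ∀ v ∈ B, p v = q v := by
  classical
  let f : B ↪ α := ⟨fun x => q x, fun a b hab => Subtype.ext (hq a.2 b.2 hab)⟩
  have hcard : (Cardinal.mk ↥(Set.range ⇑f)) = Cardinal.mk ↥B :=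
    Cardinal.mk_range_eq f f.injective
  have hne : Nonempty ((Bᶜ : Set α) ≃ ((Set.range ⇑f)ᶜ : Set α)) := by
    rcases finite_or_infinite α with h | h
    · exact Cardinal.eq.1 (Cardinal.mk_compl_eq_mk_compl_finite_same hcard.symm)
    · have h1 : Cardinal.mk ↥B < Cardinal.mk α :=
        hB.lt_aleph0.trans_le (Cardinal.aleph0_le_mk α)
      have h2 : Cardinal.mk ↥(Set.range ⇑f) < Cardinal.mk α := hcard ▸ h1
      exact Cardinal.eq.1 (Cardinal.mk_compl_eq_mk_compl_infinite h1 h2)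
  obtain ⟨g, hg⟩ := Cardinal.extend_function f hne
  exact ⟨g, fun v hv => hg ⟨v, hv⟩⟩

lemma exists_injOn_extend {γ : U → U'} {G A : Set U} [Nonempty U'] (hGA : G ⊆ A)
    (hA : A.Finite) (hγ : Set.InjOn γ G) (hcard : Cardinal.mk ↥A ≤ Cardinal.mk U') :
    ∃ f : U → U', Set.InjOn f A ∧ Set.EqOn f γ G := by
  classical
  have h1 : Cardinal.mk ↥(A \ G) ≤ Cardinal.mk ↥((γ '' G)ᶜ : Set U') := by
    have hUn : Cardinal.mk ↥(γ '' G) + Cardinal.mk ↥((γ '' G)ᶜ : Set U') = Cardinal.mk U' :=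
      Cardinal.mk_sum_compl _
    have hAu : Cardinal.mk ↥G + Cardinal.mk ↥(A \ G) = Cardinal.mk ↥A := by
      rw [← Cardinal.mk_union_of_disjoint Set.disjoint_sdiff_right, Set.union_diff_cancel hGA]
    have himg : Cardinal.mk ↥(γ '' G) = Cardinal.mk ↥G := Cardinal.mk_image_eq_of_injOn γ G hγ
    have hGfin : Cardinal.mk ↥G < Cardinal.aleph0 := (hA.subset hGA).lt_aleph0
    have hle : Cardinal.mk ↥(A \ G) + Cardinal.mk ↥G ≤
        Cardinal.mk ↥((γ '' G)ᶜ : Set U') + Cardinal.mk ↥G := by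
      rw [add_comm, hAu, add_comm, ← himg, hUn]
      exact hcard
    exact (Cardinal.add_le_add_iff_of_lt_aleph0 hGfin).1 hle
  obtain ⟨e⟩ := Cardinal.le_def _ _ |>.1 h1
  refine ⟨fun u => if h : u ∈ G then γ u else if h2 : u ∈ A \ G then (e ⟨u, h2⟩ : U')
      else Classical.arbitrary U', ?_, ?_⟩
  · intro a ha b hb hab
    simp only at hab
    by_cases hag : a ∈ G <;> by_cases hbg : b ∈ G
    · rw [dif_pos hag, dif_pos hbg] at hab; exact hγ hag hbg hab
    · rw [dif_pos hag, dif_neg hbg, dif_pos (Set.mem_diff_of_mem hb hbg)] at hab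
      exact absurd (hab ▸ Set.mem_image_of_mem γ hag) (e ⟨b, _⟩).2
    · rw [dif_neg hag, dif_pos hbg, dif_pos (Set.mem_diff_of_mem ha hag)] at hab
      exact absurd (hab.symm ▸ Set.mem_image_of_mem γ hbg) (e ⟨a, _⟩).2
    · rw [dif_neg hag, dif_pos (Set.mem_diff_of_mem ha hag), dif_neg hbg,
        dif_pos (Set.mem_diff_of_mem hb hbg)] at hab
      have := e.injective (Subtype.ext hab)
      exact congrArg Subtype.val this
  · intro u hu
    simp only [dif_pos hu]

end Helpers3
section Helpers4

variable {D : Schema} {C : Type} {n : ℕ} {sig sig' : Fin (n+1) → AgentSig} {U U' : Type}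
  {Ag : ∀ i, Agent D (sig i) U} {Ag' : ∀ i, Agent D (sig' i) U'}

lemma oplusG_map (p : U' → U') (y z : GState D n U') :
    oplusG (fun i => (y i).map p) (fun i => (z i).map p)
      = fun i => ((oplusG y z) i).map p := by
  funext i
  exact (Inst.map_oplus p (y i) (z i)).symm

lemma perm_symm_fix {cst' : C → U'} (p : U' ≃ U') (hp : ∀ c, p (cst' c) = cst' c) :
    ∀ c, p.symm (cst' c) = cst' c := fun c => by
  conv_lhs => rw [← hp c]
  exact p.symm_apply_apply _

lemma mapG_symm_cancel {X : Type} (p : U' ≃ U') (y : X → Inst D U') :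
    (fun i => ((y i).map ⇑p).map ⇑p.symm) = y := by
  funext i
  rw [Inst.map_map]
  have h : (⇑p.symm ∘ ⇑p) = id := funext fun u => p.symm_apply_apply u
  rw [h, Inst.map_id]

lemma mapG_cancel_symm {X : Type} (p : U' ≃ U') (y : X → Inst D U') :
    (fun i => ((y i).map ⇑p.symm).map ⇑p) = y := by
  funext i
  rw [Inst.map_map]
  have h : (⇑p ∘ ⇑p.symm) = id := funext fun u => p.apply_symm_apply u
  rw [h, Inst.map_id]

lemma isWitness_map_symm {X : Type} {cst' : C → U'} (p : U' ≃ U')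
    (hp : ∀ c, p (cst' c) = cst' c) (y : X → Inst D U') :
    IsWitness cst' cst' (⇑p.symm) (fun i => (y i).map ⇑p) y := by
  have h0 := isWitness_map p.symm (perm_symm_fix p hp) (fun i => (y i).map ⇑p)
  beta_reduce at h0
  rwa [mapG_symm_cancel p y] at h0

lemma obisimilar_perm [Nonempty U]
    (cst : C → U) (cst' : C → U')
    (M : ACMAS D sig Ag) (M' : ACMAS D sig' Ag')
    (hu' : Uniform cst' M')
    {R : GState D n U → GState D n U' → Prop} (hR : IsOBisim cst cst' M M' R)
    {t : GState D n U} {t'₀ : GState D n U'} (hRt : R t t'₀)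
    (p : U' ≃ U') (hp : ∀ c, p (cst' c) = cst' c)
    (ht'S : (fun i => (t'₀ i).map ⇑p) ∈ M'.S) :
    OBisimilar cst cst' M M' t (fun i => (t'₀ i).map ⇑p) := by
  classical
  refine ⟨fun x y => ∃ (y₀ : GState D n U') (q : U' ≃ U'), R x y₀ ∧
      (∀ c, q (cst' c) = cst' c) ∧ y = (fun i => (y₀ i).map ⇑q) ∧ y ∈ M'.S,
    ⟨?_, ?_⟩, t'₀, p, hRt, hp, rfl, ht'S⟩
  · -- forward simulation
    rintro x y ⟨y₀, q, hR0, hq, rfl, hyS⟩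
    have hW0 : IsWitness cst' cst' ⇑q y₀ (fun i => (y₀ i).map ⇑q) := isWitness_map q hq y₀
    obtain ⟨hxS, hy₀S, hIso, hTrS, hEpiS⟩ := hR.1 x y₀ hR0
    have hWop : ∀ z : GState D n U', IsWitness cst' cst' ⇑q (oplusG y₀ z)
        (oplusG (fun i => (y₀ i).map ⇑q) (fun i => (z i).map ⇑q)) := by
      intro z
      rw [oplusG_map]
      exact isWitness_map q hq (oplusG y₀ z)
    refine ⟨hxS, hyS, ?_, ?_, ?_⟩
    · obtain ⟨ι₀, hι₀⟩ := hIso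
      exact ⟨⇑q ∘ ι₀, hι₀.comp hW0⟩
    · intro x₁ hx₁
      obtain ⟨y₀₁, hTr01, hIso1, hR1⟩ := hTrS x₁ hx₁
      have hy₀₁S : y₀₁ ∈ M'.S := (hR.1 x₁ y₀₁ hR1).2.1
      obtain ⟨a, hτ⟩ := hTr01
      have hτ' : (fun i => (y₀₁ i).map ⇑q) ∈
          M'.τ (fun i => (y₀ i).map ⇑q) (JAct.map ⇑q a) :=
        hu'.1 y₀ hy₀S y₀₁ hy₀₁S _ hyS _ a hτ ⇑q (hWop y₀₁) ⇑q (fun _ _ => rfl)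
          q.injective.injOn hq
      have hy₁S : (fun i => (y₀₁ i).map ⇑q) ∈ M'.S := M'.tau_closed _ hyS _ hτ'
      refine ⟨_, ⟨_, hτ'⟩, ?_, y₀₁, q, hR1, hq, rfl, hy₁S⟩
      obtain ⟨ι₁, hι₁⟩ := hIso1
      exact ⟨⇑q ∘ ι₁, hι₁.comp (hWop y₀₁)⟩
    · intro x₁ i hE
      obtain ⟨y₀₁, hE01, hIso1, hR1⟩ := hEpiS x₁ i hE
      have hE' : M'.Epi i.succ (fun i => (y₀ i).map ⇑q) (fun i => (y₀₁ i).map ⇑q) :=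
        hu'.2 y₀ hy₀S y₀₁ hE01.2.1 _ hyS _ i hE01 ⟨⇑q, hWop y₀₁⟩
      refine ⟨_, hE', ?_, y₀₁, q, hR1, hq, rfl, hE'.2.1⟩
      obtain ⟨ι₁, hι₁⟩ := hIso1
      exact ⟨⇑q ∘ ι₁, hι₁.comp (hWop y₀₁)⟩
  · -- backward simulation
    rintro y x ⟨y₀, q, hR0, hq, rfl, hyS⟩
    have hqs := perm_symm_fix q hq
    obtain ⟨hy₀S, hxS, hIso', hTrS', hEpiS'⟩ := hR.2 y₀ x hR0
    have hWs : IsWitness cst' cst' (⇑q.symm) (fun i => (y₀ i).map ⇑q) y₀ :=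
      isWitness_map_symm q hq y₀
    have hWsop : ∀ z : GState D n U', IsWitness cst' cst' ⇑q.symm
        (oplusG (fun i => (y₀ i).map ⇑q) z)
        (oplusG y₀ (fun i => (z i).map ⇑q.symm)) := by
      intro z
      have h0 := isWitness_map_symm q hq (oplusG y₀ (fun i => (z i).map ⇑q.symm))
      beta_reduce at h0
      rw [← oplusG_map ⇑q y₀ (fun i => (z i).map ⇑q.symm)] at h0
      rwa [mapG_cancel_symm q z] at h0
    refine ⟨hyS, hxS, ?_, ?_, ?_⟩
    · obtain ⟨κ₀, hκ₀⟩ := hIso'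
      exact ⟨κ₀ ∘ ⇑q.symm, hWs.comp hκ₀⟩
    · intro y₁ hy₁
      obtain ⟨a, hτ⟩ := hy₁
      have hy₁S : y₁ ∈ M'.S := M'.tau_closed _ hyS _ hτ
      have hτ0 : (fun i => (y₁ i).map ⇑q.symm) ∈ M'.τ y₀ (JAct.map ⇑q.symm a) :=
        hu'.1 _ hyS y₁ hy₁S y₀ hy₀S _ a hτ ⇑q.symm (hWsop y₁) ⇑q.symm
          (fun _ _ => rfl) q.symm.injective.injOn hqs
      have hy₀₁S : (fun i => (y₁ i).map ⇑q.symm) ∈ M'.S := M'.tau_closed _ hy₀S _ hτ0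
      obtain ⟨x₁, hTrx, hIso1, hR1⟩ := hTrS' _ ⟨_, hτ0⟩
      refine ⟨x₁, hTrx, ?_, (fun i => (y₁ i).map ⇑q.symm), q, hR1, hq, ?_, hy₁S⟩
      · obtain ⟨κ₁, hκ₁⟩ := hIso1
        exact ⟨κ₁ ∘ ⇑q.symm, (hWsop y₁).comp hκ₁⟩
      · exact (mapG_cancel_symm q y₁).symm
    · intro y₁ i hE
      have hy₁S : y₁ ∈ M'.S := hE.2.1
      have hE0 : M'.Epi i.succ y₀ (fun i => (y₁ i).map ⇑q.symm) :=
        hu'.2 _ hyS y₁ hy₁S y₀ hy₀S _ i hE ⟨⇑q.symm, hWsop y₁⟩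
      obtain ⟨x₁, hEx, hIso1, hR1⟩ := hEpiS' _ i hE0
      refine ⟨x₁, hEx, ?_, (fun i => (y₁ i).map ⇑q.symm), q, hR1, hq, ?_, hy₁S⟩
      · obtain ⟨κ₁, hκ₁⟩ := hIso1
        exact ⟨κ₁ ∘ ⇑q.symm, (hWsop y₁).comp hκ₁⟩
      · exact (mapG_cancel_symm q y₁).symm

end Helpers4
section KeyLemma

variable {D : Schema} {C : Type} [Fintype C] {n : ℕ} {U U' : Type}

lemma key_construction [Nonempty U] [Nonempty U']
    (cst : C → U) (cst' : C → U')
    {s t : GState D n U} {s' t'₀ : GState D n U'}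
    {ι : U → U'} (hι : IsWitness cst cst' ι (oplusG s t) (oplusG s' t'₀))
    {F : Set ℕ} (hFfin : F.Finite) (σ : ℕ → U) (σ' : ℕ → U')
    {γ : U → U'}
    (hγbij : Set.BijOn γ (adomF s ∪ Set.range cst ∪ σ '' F)
        (adomF s' ∪ Set.range cst' ∪ σ' '' F))
    (hγwit : IsWitness cst cst' γ s s')
    (hγσ : ∀ x ∈ F, σ' x = γ (σ x))
    (hcard : Cardinal.mk ↥(adomF s ∪ adomF t ∪ Set.range cst ∪ σ '' F) ≤ Cardinal.mk U') :
    ∃ p : U' ≃ U', (∀ c, p (cst' c) = cst' c) ∧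
      IsWitness cst' cst' (⇑p) (oplusG s' t'₀) (oplusG s' (fun i => (t'₀ i).map ⇑p)) ∧
      EqAssign cst cst' F σ σ' t (fun i => (t'₀ i).map ⇑p) := by
  classical
  -- basic set inclusions
  have hGA : adomF s ∪ Set.range cst ∪ σ '' F ⊆
      adomF s ∪ adomF t ∪ Set.range cst ∪ σ '' F := by
    intro u hu
    rcases hu with (hu | hu) | hu
    · exact Or.inl (Or.inl (Or.inl hu))
    · exact Or.inl (Or.inr hu)
    · exact Or.inr hu
  have hA0eq : adomF (oplusG s t) ∪ Set.range cst = adomF s ∪ adomF t ∪ Set.range cst := by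
    rw [adomF_oplusG]
  have hA0A : adomF (oplusG s t) ∪ Set.range cst ⊆
      adomF s ∪ adomF t ∪ Set.range cst ∪ σ '' F := by
    rw [hA0eq]; exact Set.subset_union_left
  have hsC_G : adomF s ∪ Set.range cst ⊆ adomF s ∪ Set.range cst ∪ σ '' F :=
    Set.subset_union_left
  have hsC_A0 : adomF s ∪ Set.range cst ⊆ adomF (oplusG s t) ∪ Set.range cst := by
    rw [hA0eq]
    rintro u (hu | hu)
    · exact Or.inl (Or.inl hu)
    · exact Or.inr hu
  have htC_A0 : adomF t ∪ Set.range cst ⊆ adomF (oplusG s t) ∪ Set.range cst := by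
    rw [hA0eq]
    rintro u (hu | hu)
    · exact Or.inl (Or.inr hu)
    · exact Or.inr hu
  have hσF_G : σ '' F ⊆ adomF s ∪ Set.range cst ∪ σ '' F := Set.subset_union_right
  have hAfin : (adomF s ∪ adomF t ∪ Set.range cst ∪ σ '' F).Finite :=
    (((adomF_finite s).union (adomF_finite t)).union (Set.finite_range cst)).union
      (hFfin.image σ)
  -- extend γ to an injection f on A
  obtain ⟨f, hfinj, hfG⟩ := exists_injOn_extend hGA hAfin hγbij.injOn hcard
  -- the partial map q on U' and its extension to a permutation p
  have hB₀img : adomF (oplusG s' t'₀) ∪ Set.range cst' =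
      ι '' (adomF (oplusG s t) ∪ Set.range cst) := hι.1.image_eq.symm
  have hinv_mem : ∀ v ∈ adomF (oplusG s' t'₀) ∪ Set.range cst',
      Function.invFunOn ι (adomF (oplusG s t) ∪ Set.range cst) v ∈
        adomF (oplusG s t) ∪ Set.range cst := fun v hv =>
    Function.invFunOn_mem (by rw [hB₀img] at hv; exact hv)
  have hinv_right : ∀ v ∈ adomF (oplusG s' t'₀) ∪ Set.range cst',
      ι (Function.invFunOn ι (adomF (oplusG s t) ∪ Set.range cst) v) = v := fun v hv =>
    Function.invFunOn_eq (by rw [hB₀img] at hv; exact hv)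
  have hinv_left : ∀ u ∈ adomF (oplusG s t) ∪ Set.range cst,
      Function.invFunOn ι (adomF (oplusG s t) ∪ Set.range cst) (ι u) = u := fun u hu =>
    hι.1.injOn.leftInvOn_invFunOn hu
  have hqinj : Set.InjOn
      (fun v => f (Function.invFunOn ι (adomF (oplusG s t) ∪ Set.range cst) v))
      (adomF (oplusG s' t'₀) ∪ Set.range cst') := by
    intro v hv w hw hvw
    simp only at hvw
    have h1 := hfinj (hA0A (hinv_mem v hv)) (hA0A (hinv_mem w hw)) hvw
    rw [← hinv_right v hv, ← hinv_right w hw, h1]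
  have hB₀fin : (adomF (oplusG s' t'₀) ∪ Set.range cst').Finite := by
    rw [hB₀img]
    exact (((adomF_finite _).union (Set.finite_range cst))).image ι
  obtain ⟨p, hpq⟩ := exists_perm_extend hB₀fin hqinj
  have hP1 : ∀ u ∈ adomF (oplusG s t) ∪ Set.range cst, p (ι u) = f u := by
    intro u hu
    have hmem : ι u ∈ adomF (oplusG s' t'₀) ∪ Set.range cst' := hι.1.mapsTo hu
    rw [hpq _ hmem]
    exact congrArg f (hinv_left u hu)
  have hPc : ∀ c, p (cst' c) = cst' c := by
    intro c
    have h1 : cst c ∈ adomF (oplusG s t) ∪ Set.range cst := Or.inr ⟨c, rfl⟩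
    have h2 := hP1 (cst c) h1
    rw [hι.2.1 c] at h2
    rw [h2, hfG (hsC_G (Or.inr ⟨c, rfl⟩)), hγwit.2.1 c]
  obtain ⟨hpart1, hpart2⟩ := witness_oplus_parts hι
  -- images of f
  have hfEqS : Set.EqOn f γ (adomF s ∪ Set.range cst) := hfG.mono hsC_G
  have hPimgS : f '' (adomF s ∪ Set.range cst) = adomF s' ∪ Set.range cst' := by
    rw [hfEqS.image_eq, hγwit.1.image_eq]
  have hfP1t : Set.EqOn f (⇑p ∘ ι) (adomF t ∪ Set.range cst) := fun u hu =>
    (hP1 u (htC_A0 hu)).symm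
  have hpC' : ⇑p '' Set.range cst' = Set.range cst' := by
    ext v; constructor
    · rintro ⟨_, ⟨c, rfl⟩, rfl⟩; exact ⟨c, (hPc c).symm⟩
    · rintro ⟨c, rfl⟩; exact ⟨cst' c, ⟨c, rfl⟩, hPc c⟩
  have hPimgT : f '' (adomF t ∪ Set.range cst) =
      adomF (fun i => (t'₀ i).map ⇑p) ∪ Set.range cst' := by
    rw [hfP1t.image_eq, Set.image_comp, hpart2, Set.image_union, hpC', adomF_map]
  have hPimgσ : f '' (σ '' F) = σ' '' F := by
    ext v; constructor
    · rintro ⟨_, ⟨x, hx, rfl⟩, rfl⟩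
      rw [hfG (hσF_G ⟨x, hx, rfl⟩), ← hγσ x hx]
      exact ⟨x, hx, rfl⟩
    · rintro ⟨x, hx, rfl⟩
      exact ⟨σ x, ⟨x, hx, rfl⟩, by rw [hfG (hσF_G ⟨x, hx, rfl⟩), ← hγσ x hx]⟩
  refine ⟨p, hPc, ⟨?_, hPc, ?_⟩, ?_⟩
  · -- BijOn p on the oplus domains
    refine bijOn_of_image_eq p.injective.injOn ?_
    have hEq : Set.EqOn (⇑p ∘ ι) f (adomF s ∪ Set.range cst) := fun u hu =>
      hP1 u (hsC_A0 hu)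
    have h1 : ⇑p '' (adomF s' ∪ Set.range cst') = adomF s' ∪ Set.range cst' := by
      conv_lhs => rw [← hpart1, ← Set.image_comp]
      rw [hEq.image_eq, hPimgS]
    calc ⇑p '' (adomF (oplusG s' t'₀) ∪ Set.range cst')
        = ⇑p '' ((adomF s' ∪ Set.range cst') ∪ adomF t'₀) := by
          rw [adomF_oplusG, Set.union_right_comm]
      _ = (adomF s' ∪ Set.range cst') ∪ ⇑p '' adomF t'₀ := by
          rw [Set.image_union, h1]
      _ = adomF (oplusG s' (fun i => (t'₀ i).map ⇑p)) ∪ Set.range cst' := by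
          rw [adomF_oplusG, adomF_map, Set.union_right_comm]
  · -- relation condition for the big witness p
    intro i r τ hτ
    cases r with
    | inr r₀ =>
      show τ ∈ (t'₀ i).rel r₀ ↔ (fun j => p (τ j)) ∈ ((t'₀ i).map ⇑p).rel r₀
      constructor
      · intro h; exact ⟨τ, h, rfl⟩
      · rintro ⟨τ0, h0, he⟩
        have : τ0 = τ := funext fun j => p.injective (congrFun he j)
        exact this ▸ h0
    | inl r₀ =>
      show τ ∈ (s' i).rel r₀ ↔ (fun j => p (τ j)) ∈ (s' i).rel r₀
      have hmem : ∀ j, τ j ∈ ι '' (adomF (oplusG s t) ∪ Set.range cst) := fun j =>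
        hB₀img ▸ hτ j
      choose u humem hueq using hmem
      have hpτ : (fun j => p (τ j)) = fun j => f (u j) := funext fun j => by
        rw [← hueq j, hP1 _ (humem j)]
      have hιiff : u ∈ (s i).rel r₀ ↔ τ ∈ (s' i).rel r₀ := by
        have h0 : u ∈ (s i).rel r₀ ↔ (fun j => ι (u j)) ∈ (s' i).rel r₀ :=
          hι.2.2 i (Sum.inl r₀) u humem
        rw [show (fun j => ι (u j)) = τ from funext hueq] at h0
        exact h0
      rw [hpτ]
      constructor
      · intro hτs'
        have hus : u ∈ (s i).rel r₀ := hιiff.mpr hτs'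
        have huadom : ∀ j, u j ∈ adomF s ∪ Set.range cst := fun j =>
          Or.inl (mem_adomF.2 ⟨i, r₀, u, hus, j, rfl⟩)
        have hfg : (fun j => f (u j)) = (fun j => γ (u j)) :=
          funext fun j => hfEqS (huadom j)
        rw [hfg]
        exact (hγwit.2.2 i r₀ u huadom).mp hus
      · intro hps'
        have huG : ∀ j, u j ∈ adomF s ∪ Set.range cst := by
          intro j
          have hent : f (u j) ∈ adomF s' ∪ Set.range cst' :=
            Or.inl (mem_adomF.2 ⟨i, r₀, _, hps', j, rfl⟩)
          rw [← hPimgS] at hent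
          obtain ⟨w, hw, hweq⟩ := hent
          have : w = u j := hfinj (hGA (hsC_G hw)) (hA0A (humem j)) hweq
          exact this ▸ hw
        have hfg : (fun j => f (u j)) = (fun j => γ (u j)) :=
          funext fun j => hfEqS (huG j)
        rw [hfg] at hps'
        exact hιiff.mp ((hγwit.2.2 i r₀ u huG).mpr hps')
  · -- EqAssign for t and t'
    have htCσ_A : adomF t ∪ Set.range cst ∪ σ '' F ⊆
        adomF s ∪ adomF t ∪ Set.range cst ∪ σ '' F := by
      rintro u ((hu | hu) | hu)
      · exact Or.inl (Or.inl (Or.inr hu))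
      · exact Or.inl (Or.inr hu)
      · exact Or.inr hu
    refine ⟨f, ?_, ⟨?_, ?_, ?_⟩, ?_⟩
    · refine bijOn_of_image_eq (hfinj.mono htCσ_A) ?_
      rw [Set.image_union, hPimgT, hPimgσ]
    · refine bijOn_of_image_eq (hfinj.mono fun u hu => htCσ_A (Or.inl hu)) ?_
      exact hPimgT
    · intro c
      rw [hfG (hsC_G (Or.inr ⟨c, rfl⟩)), hγwit.2.1 c]
    · -- relation condition for f between t and t'
      intro i r τ hτ
      have hτA0 : ∀ j, τ j ∈ adomF (oplusG s t) ∪ Set.range cst := fun j =>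
        htC_A0 (hτ j)
      have h0 : τ ∈ (t i).rel r ↔ (fun j => ι (τ j)) ∈ (t'₀ i).rel r :=
        hι.2.2 i (Sum.inr r) τ hτA0
      rw [h0]
      show (fun j => ι (τ j)) ∈ (t'₀ i).rel r ↔
        (fun j => f (τ j)) ∈ ((t'₀ i).map ⇑p).rel r
      have hfp : (fun j => f (τ j)) = fun j => p (ι (τ j)) := funext fun j =>
        (hP1 _ (hτA0 j)).symm
      rw [hfp]
      constructor
      · intro h; exact ⟨fun j => ι (τ j), h, rfl⟩
      · rintro ⟨τ0, h0', he⟩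
        have : τ0 = fun j => ι (τ j) := funext fun j => p.injective (congrFun he j)
        exact this ▸ h0'
    · intro x hx
      rw [hfG (hσF_G ⟨x, hx, rfl⟩)]
      exact hγσ x hx

end KeyLemma
theorem statement8
    {D : Schema} {C : Type} [Fintype C] {n : ℕ}
    {sig sig' : Fin (n+1) → AgentSig} {U U' : Type}
    (cst : C → U) (cst' : C → U')
    (hcst : Function.Injective cst) (hcst' : Function.Injective cst')
    {Ag : ∀ i, Agent D (sig i) U} {Ag' : ∀ i, Agent D (sig' i) U'}
    (M : ACMAS D sig Ag) (M' : ACMAS D sig' Ag')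
    (hM : M.Std) (hM' : M'.Std)
    (hu : Uniform cst M) (hu' : Uniform cst' M')
    (hsys : OBisimSys cst cst' M M')
    (s : GState D n U) (s' : GState D n U')
    (hss' : OBisimilar cst cst' M M' s s')
    (φ : FOCTLK D C n) (σ : ℕ → U) (σ' : ℕ → U')
    (heq : EqAssign cst cst' ↑φ.free σ σ' s s') :
    (∀ t, M.Tr s t →
      Cardinal.mk ↥(adomF s ∪ adomF t ∪ Set.range cst ∪ σ '' ↑φ.free) ≤ Cardinal.mk U' →
      ∃ t', M'.Tr s' t' ∧ OBisimilar cst cst' M M' t t' ∧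
        EqAssign cst cst' ↑φ.free σ σ' t t') ∧
    (∀ t (i : Fin n), M.Epi i.succ s t →
      Cardinal.mk ↥(adomF s ∪ adomF t ∪ Set.range cst ∪ σ '' ↑φ.free) ≤ Cardinal.mk U' →
      ∃ t', M'.Epi i.succ s' t' ∧ OBisimilar cst cst' M M' t t' ∧
        EqAssign cst cst' ↑φ.free σ σ' t t') := by
  haveI : Nonempty U := ⟨σ 0⟩
  obtain ⟨γ, hγbij, hγwit, hγσ⟩ := heq
  haveI : Nonempty U' := ⟨γ (σ 0)⟩
  obtain ⟨R, hR, hRss'⟩ := hss'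
  obtain ⟨hsS, hs'S, -, hTrS, hEpiS⟩ := hR.1 s s' hRss'
  constructor
  · intro t htr hcard
    obtain ⟨t'₀, hTr'0, hIsoOp, hRt⟩ := hTrS t htr
    obtain ⟨ι, hι⟩ := hIsoOp
    obtain ⟨p, hpc, hW, hEqA⟩ := key_construction cst cst' hι
      (Finset.finite_toSet φ.free) σ σ' hγbij hγwit hγσ hcard
    obtain ⟨a, hτ0⟩ := hTr'0
    have ht'₀S : t'₀ ∈ M'.S := M'.tau_closed _ hs'S _ hτ0
    have hτ' : (fun i => (t'₀ i).map ⇑p) ∈ M'.τ s' (JAct.map ⇑p a) :=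
      hu'.1 s' hs'S t'₀ ht'₀S s' hs'S _ a hτ0 ⇑p hW ⇑p (fun _ _ => rfl)
        p.injective.injOn hpc
    have ht'S : (fun i => (t'₀ i).map ⇑p) ∈ M'.S := M'.tau_closed _ hs'S _ hτ'
    exact ⟨_, ⟨_, hτ'⟩, obisimilar_perm cst cst' M M' hu' hR hRt p hpc ht'S, hEqA⟩
  · intro t i hE hcard
    obtain ⟨t'₀, hE'0, hIsoOp, hRt⟩ := hEpiS t i hE
    obtain ⟨ι, hι⟩ := hIsoOp
    obtain ⟨p, hpc, hW, hEqA⟩ := key_construction cst cst' hι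
      (Finset.finite_toSet φ.free) σ σ' hγbij hγwit hγσ hcard
    have hE' : M'.Epi i.succ s' (fun i => (t'₀ i).map ⇑p) :=
      hu'.2 s' hs'S t'₀ hE'0.2.1 s' hs'S _ i hE'0 ⟨⇑p, hW⟩
    exact ⟨_, hE', obisimilar_perm cst cst' M M' hu' hR hRt p hpc hE'.2.1, hEqA⟩
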